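/- arXiv:0804.4357 — 5 statements merged into one kernel-verified Lean document; each statement's English description precedes it below -/
import Mathlib

section
/- Let p = 2^m + 1 ≥ 5 be prime, g a primitive root mod p, and ε = exp(2πi/p). Define A_0 = Σ_{j=1}^{2^{m-1}} ε^{g^{2j}} and A_1 = Σ_{j=1}^{2^{m-1}} ε^{g^{2j-1}}. Then A_0 · A_1 = −(p−1)/4. -/
open Complex Finset

private lemma sum_double_split (f : ℕ → ℂ) : ∀ N : ℕ,
    (∑ j ∈ Icc 1 N, f (2 * j)) + (∑ j ∈ Icc 1 N, f (2 * j - 1)) = ∑ k ∈ Icc 1 (2 * N), f k := by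
  intro N
  induction N with
  | zero => simp
  | succ n ih =>
    have h2 : 2 * (n + 1) = (2 * n + 1) + 1 := by ring
    rw [Finset.sum_Icc_succ_top (by omega) (fun j => f (2 * j)),
        Finset.sum_Icc_succ_top (by omega) (fun j => f (2 * j - 1)), h2,
        Finset.sum_Icc_succ_top (by omega) f, Finset.sum_Icc_succ_top (by omega) f]
    have e3 : 2 * n + 1 + 1 - 1 = 2 * n + 1 := by omega
    rw [e3]
    linear_combination ih

theorem stmt_7 (m p : ℕ) (hp : p = 2 ^ m + 1) (hp5 : 5 ≤ p) (hprime : p.Prime)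
    (g : ℕ) (hg : orderOf (g : ZMod p) = p - 1)
    (ε : ℂ) (hε : ε = Complex.exp (2 * Real.pi * Complex.I / p)) :
    (∑ j ∈ Finset.Icc 1 (2 ^ (m - 1)), ε ^ (g ^ (2 * j))) *
      (∑ j ∈ Finset.Icc 1 (2 ^ (m - 1)), ε ^ (g ^ (2 * j - 1))) =
    -(((p : ℂ) - 1) / 4) := by
  haveI : Fact p.Prime := ⟨hprime⟩
  haveI : NeZero p := ⟨by omega⟩
  have hm : 2 ≤ m := by
    by_contra h
    push_neg at h
    interval_cases m <;> omega
  set N : ℕ := 2 ^ (m - 1) with hNdef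
  have hN : 2 * N = p - 1 := by
    have : 2 * 2 ^ (m - 1) = 2 ^ m := by
      rw [← pow_succ']
      congr 1
      omega
    omega
  -- the primitive root
  have hprim : IsPrimitiveRoot ε p := by
    rw [hε]; exact Complex.isPrimitiveRoot_exp p (by omega)
  have hεp : ε ^ p = 1 := hprim.pow_eq_one
  -- the additive character
  set ψ : AddChar (ZMod p) ℂ := AddChar.zmodChar p hεp with hψdef
  have hψ_ap : ∀ n : ℕ, ψ ((n : ZMod p)) = ε ^ n := fun n =>
    AddChar.zmodChar_apply' hεp n
  have hψprim : ψ.IsPrimitive :=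
    AddChar.zmodChar_primitive_of_primitive_root p hprim
  -- the multiplicative character
  have hchar2 : ringChar (ZMod p) ≠ 2 := by
    rw [ZMod.ringChar_zmod_n]; omega
  set χ : MulChar (ZMod p) ℂ :=
    (quadraticChar (ZMod p)).ringHomComp (Int.castRingHom ℂ) with hχdef
  have hχ1 : χ ≠ 1 :=
    (MulChar.ringHomComp_ne_one_iff Int.cast_injective).mpr (quadraticChar_ne_one hchar2)
  have hχ2 : χ.IsQuadratic := (quadraticChar_isQuadratic (ZMod p)).comp _
  have hp4 : p % 4 = 1 := by
    have h4 : (4 : ℕ) ∣ 2 ^ m := by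
      have : 2 ^ m = 4 * 2 ^ (m - 2) := by
        rw [show (4 : ℕ) = 2 ^ 2 by norm_num, ← pow_add]
        congr 1
        omega
      exact ⟨2 ^ (m - 2), this⟩
    omega
  have hχneg1 : χ (-1) = 1 := by
    have hsq : IsSquare (-1 : ZMod p) := by
      rw [ZMod.exists_sq_eq_neg_one_iff]
      omega
    have : quadraticChar (ZMod p) (-1) = 1 :=
      (quadraticChar_one_iff_isSquare (neg_ne_zero.mpr one_ne_zero)).mpr hsq
    rw [hχdef, MulChar.ringHomComp_apply, this]
    norm_num
  have hGsq : gaussSum χ ψ ^ 2 = (p : ℂ) := by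
    rw [gaussSum_sq hχ1 hχ2 hψprim, hχneg1, one_mul, ZMod.card]
  -- facts about u = g mod p
  set u : ZMod p := (g : ZMod p) with hudef
  have hup : u ^ (p - 1) = 1 := by rw [← hg]; exact pow_orderOf_eq_one u
  have hu_unit : IsUnit u := IsUnit.of_pow_eq_one hup (by omega)
  have hu_pow_ne : ∀ k : ℕ, u ^ k ≠ 0 := fun k => (hu_unit.pow k).ne_zero
  have hχu : quadraticChar (ZMod p) u = -1 := by
    rw [quadraticChar_neg_one_iff_not_isSquare]
    intro hsq
    have hu0 : u ≠ 0 := by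
      intro h
      rw [h, zero_pow (by omega : p - 1 ≠ 0)] at hup
      exact zero_ne_one hup
    have h1 : u ^ (Fintype.card (ZMod p) / 2) = 1 :=
      (FiniteField.isSquare_iff hchar2 hu0).mp hsq
    rw [ZMod.card] at h1
    have hdvd : orderOf u ∣ p / 2 := orderOf_dvd_of_pow_eq_one h1
    rw [hg] at hdvd
    have := Nat.le_of_dvd (by omega) hdvd
    omega
  have hχuk : ∀ k : ℕ, χ (u ^ k) = (-1 : ℂ) ^ k := by
    intro k
    rw [hχdef, MulChar.ringHomComp_apply, map_pow, hχu, map_pow, map_neg, map_one]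
  -- injectivity helper
  have hmodinj : ∀ a ∈ Icc 1 (p - 1), ∀ b ∈ Icc 1 (p - 1),
      a % (p - 1) = b % (p - 1) → a = b := by
    intro a ha b hb h
    rw [mem_Icc] at ha hb
    have key : ∀ c : ℕ, 1 ≤ c → c ≤ p - 1 → c % (p - 1) = if c = p - 1 then 0 else c := by
      intro c h1 h2
      split_ifs with hc
      · rw [hc, Nat.mod_self]
      · exact Nat.mod_eq_of_lt (by omega)
    rw [key a ha.1 ha.2, key b hb.1 hb.2] at h
    split_ifs at h <;> omega
  -- the unit version of u
  set ug : (ZMod p)ˣ := hu_unit.unit with hugdef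
  have hug_coe : (ug : ZMod p) = u := hu_unit.unit_spec
  have hug_ord : orderOf ug = p - 1 := by
    rw [← hg, ← hug_coe, orderOf_units]
  have htop : ∀ x : (ZMod p)ˣ, x ∈ Subgroup.zpowers ug := by
    intro x
    have hcard : Nat.card (Subgroup.zpowers ug) = Nat.card (ZMod p)ˣ := by
      rw [Nat.card_zpowers, hug_ord, Nat.card_eq_fintype_card, ZMod.card_units]
    rw [Subgroup.eq_top_of_card_eq _ hcard]
    exact Subgroup.mem_top x
  -- the reindexing bijection
  have key : ∀ F : ZMod p → ℂ,
      ∑ k ∈ Icc 1 (p - 1), F (u ^ k) = ∑ a ∈ univ.erase (0 : ZMod p), F a := by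
    intro F
    refine Finset.sum_bij (fun k _ => u ^ k) ?_ ?_ ?_ ?_
    · intro k hk
      exact Finset.mem_erase.mpr ⟨hu_pow_ne k, Finset.mem_univ _⟩
    · intro a ha b hb h
      have h' : u ^ a = u ^ b := h
      have h'' : ug ^ a = ug ^ b := Units.ext (by
        rw [Units.val_pow_eq_pow_val, Units.val_pow_eq_pow_val, hug_coe]; exact h')
      have := pow_eq_pow_iff_modEq.mp h''
      rw [hug_ord] at this
      exact hmodinj a ha b hb this
    · intro b hb
      have hb0 : b ≠ 0 := (Finset.mem_erase.mp hb).1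
      have hbu : IsUnit b := Ne.isUnit hb0
      obtain ⟨n, hn⟩ := Submonoid.mem_powers_iff _ _ |>.mp
        ((mem_powers_iff_mem_zpowers).mpr (htop hbu.unit))
      refine ⟨if n % (p - 1) = 0 then p - 1 else n % (p - 1), ?_, ?_⟩
      · rw [mem_Icc]
        have := Nat.mod_lt n (y := p - 1) (by omega)
        split_ifs <;> omega
      · have h1 : ug ^ (if n % (p - 1) = 0 then p - 1 else n % (p - 1)) = ug ^ n := by
          rw [← pow_mod_orderOf ug n, hug_ord]
          split_ifs with h0
          · rw [h0, pow_zero, ← hug_ord, pow_orderOf_eq_one]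
          · rfl
        have h2 : ug ^ (if n % (p - 1) = 0 then p - 1 else n % (p - 1)) = hbu.unit := by
          rw [h1, hn]
        have := congrArg (Units.val) h2
        rw [Units.val_pow_eq_pow_val, hug_coe, hbu.unit_spec] at this
        exact this
    · intro k hk
      rfl
  -- pointwise values
  have hψuk : ∀ k : ℕ, ψ (u ^ k) = ε ^ (g ^ k) := by
    intro k
    have : u ^ k = ((g ^ k : ℕ) : ZMod p) := by push_cast [hudef]; ring
    rw [this, hψ_ap]
  -- sum of ψ over nonzero elements is -1
  have hψsum : ∑ a ∈ univ.erase (0 : ZMod p), ψ a = -1 := by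
    have hψne : ψ ≠ 0 := by
      intro h
      have h1 : ψ ((1 : ℕ) : ZMod p) = ε := by rw [hψ_ap]; exact pow_one ε
      rw [h] at h1
      have : ε = 1 := by
        simpa using h1.symm
      exact hprim.ne_one (by omega) this
    have htot : ∑ a : ZMod p, ψ a = 0 := AddChar.sum_eq_zero_iff_ne_zero.mpr hψne
    have hsplit : ∑ a : ZMod p, ψ a
        = ψ 0 + ∑ a ∈ univ.erase (0 : ZMod p), ψ a :=
      (Finset.add_sum_erase univ ψ (Finset.mem_univ 0)).symm
    rw [htot, AddChar.map_zero_eq_one] at hsplit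
    linear_combination -hsplit
  set A0 := ∑ j ∈ Icc 1 N, ε ^ (g ^ (2 * j)) with hA0def
  set A1 := ∑ j ∈ Icc 1 N, ε ^ (g ^ (2 * j - 1)) with hA1def
  have hA01 : A0 + A1 = -1 := by
    have hs := sum_double_split (fun k => ε ^ (g ^ k)) N
    rw [hN] at hs
    calc A0 + A1 = ∑ k ∈ Icc 1 (p - 1), ε ^ (g ^ k) := hs
      _ = ∑ k ∈ Icc 1 (p - 1), ψ (u ^ k) := by
          refine Finset.sum_congr rfl fun k _ => ?_
          rw [hψuk]
      _ = ∑ a ∈ univ.erase (0 : ZMod p), ψ a := key ψ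
      _ = -1 := hψsum
  have hG : gaussSum χ ψ = A0 - A1 := by
    have hs := sum_double_split (fun k => (-1 : ℂ) ^ k * ε ^ (g ^ k)) N
    rw [hN] at hs
    have e0 : ∑ j ∈ Icc 1 N, (-1 : ℂ) ^ (2 * j) * ε ^ (g ^ (2 * j)) = A0 := by
      refine Finset.sum_congr rfl fun j hj => ?_
      rw [pow_mul]
      norm_num
    have e1 : ∑ j ∈ Icc 1 N, (-1 : ℂ) ^ (2 * j - 1) * ε ^ (g ^ (2 * j - 1)) = -A1 := by
      rw [hA1def, ← Finset.sum_neg_distrib]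
      refine Finset.sum_congr rfl fun j hj => ?_
      have hj1 : 1 ≤ j := (mem_Icc.mp hj).1
      rw [Odd.neg_one_pow ⟨j - 1, by omega⟩]
      ring
    calc gaussSum χ ψ = ∑ a : ZMod p, χ a * ψ a := rfl
      _ = ∑ a ∈ univ.erase (0 : ZMod p), χ a * ψ a := by
          rw [Finset.sum_erase _ (by rw [MulChar.map_zero]; ring)]
      _ = ∑ k ∈ Icc 1 (p - 1), χ (u ^ k) * ψ (u ^ k) := (key fun a => χ a * ψ a).symm
      _ = ∑ k ∈ Icc 1 (p - 1), (-1 : ℂ) ^ k * ε ^ (g ^ k) := by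
          refine Finset.sum_congr rfl fun k _ => ?_
          rw [hχuk, hψuk]
      _ = (∑ j ∈ Icc 1 N, (-1 : ℂ) ^ (2 * j) * ε ^ (g ^ (2 * j)))
            + ∑ j ∈ Icc 1 N, (-1 : ℂ) ^ (2 * j - 1) * ε ^ (g ^ (2 * j - 1)) := hs.symm
      _ = A0 - A1 := by rw [e0, e1]; ring
  have h2 : (A0 - A1) ^ 2 = (p : ℂ) := by rw [← hG]; exact hGsq
  linear_combination ((A0 + A1 - 1) / 4) * hA01 - (1 / 4) * h2
end

section
/- cos(2π/17) is constructible, i.e., cos(2π/17) lies in the smallest subfield of R closed under taking square roots of its nonnegative elements. -/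
inductive IsConstr : ℝ → Prop
  | one : IsConstr 1
  | add : ∀ {a b}, IsConstr a → IsConstr b → IsConstr (a + b)
  | neg : ∀ {a}, IsConstr a → IsConstr (-a)
  | mul : ∀ {a b}, IsConstr a → IsConstr b → IsConstr (a * b)
  | inv : ∀ {a}, IsConstr a → IsConstr a⁻¹
  | sqrt : ∀ {a}, IsConstr a → 0 ≤ a → IsConstr (Real.sqrt a)

namespace Gauss17

noncomputable def c (k : ℕ) : ℝ := Real.cos (2 * Real.pi * k / 17)

lemma isConstr_congr {a b : ℝ} (h : a = b) (ha : IsConstr a) : IsConstr b := h ▸ ha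

lemma two : IsConstr 2 :=
  isConstr_congr (show (1:ℝ)+1 = 2 by norm_num) (.add .one .one)

lemma four : IsConstr 4 :=
  isConstr_congr (show (2:ℝ)*2 = 4 by norm_num) (.mul two two)

lemma isConstr_quad {b d x : ℝ} (hb : IsConstr b) (hd : IsConstr d)
    (h : x^2 + b*x + d = 0) : IsConstr x := by
  have hdisc : b^2 - 4*d = (2*x+b)^2 := by linear_combination (-4 : ℝ) * h
  have h0 : (0:ℝ) ≤ b^2 - 4*d := by rw [hdisc]; positivity
  have hic : IsConstr (b^2 - 4*d) :=
    isConstr_congr (show b*b + -(4*d) = b^2 - 4*d by ring)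
      (.add (.mul hb hb) (.neg (.mul four hd)))
  have hs : IsConstr (Real.sqrt (b^2 - 4*d)) := .sqrt hic h0
  have hsv : Real.sqrt (b^2 - 4*d) = |2*x+b| := by rw [hdisc, Real.sqrt_sq_eq_abs]
  rcases abs_cases (2*x+b) with ⟨he, _⟩ | ⟨he, _⟩
  · have hx : (Real.sqrt (b^2-4*d) + -b) * 2⁻¹ = x := by rw [hsv, he]; ring
    exact isConstr_congr hx (.mul (.add hs (.neg hb)) (.inv two))
  · have hx : (-(Real.sqrt (b^2-4*d)) + -b) * 2⁻¹ = x := by rw [hsv, he]; ring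
    exact isConstr_congr hx (.mul (.add (.neg hs) (.neg hb)) (.inv two))

lemma cred (a : ℝ) : Real.cos (2 * Real.pi - a) = Real.cos a := by
  rw [Real.cos_sub, Real.cos_two_pi, Real.sin_two_pi]; ring

lemma creduce (m n : ℕ) (h : m + n = 17) : c m = c n := by
  have hm : (m:ℝ) = 17 - n := by
    have : (m:ℝ) + n = 17 := by exact_mod_cast congrArg (Nat.cast : ℕ → ℝ) h
    linarith
  unfold c
  rw [show 2 * Real.pi * (m:ℝ) / 17 = 2 * Real.pi - 2 * Real.pi * n / 17 by
    rw [hm]; ring, cred]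

lemma hc0 : c 0 = 1 := by simp [c]

lemma hmul (i j : ℕ) (h : j ≤ i) : c i * c j = (c (i+j) + c (i-j))/2 := by
  unfold c
  have hij : ((i - j : ℕ) : ℝ) = (i:ℝ) - j := by
    push_cast [Nat.cast_sub h]; ring
  rw [show 2 * Real.pi * ((i+j : ℕ):ℝ) / 17
      = 2 * Real.pi * i / 17 + 2 * Real.pi * j / 17 by push_cast; ring,
    show 2 * Real.pi * ((i-j : ℕ):ℝ) / 17
      = 2 * Real.pi * i / 17 - 2 * Real.pi * j / 17 by rw [hij]; ring,
    Real.cos_add, Real.cos_sub]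
  ring

lemma hsum : c 1 + c 2 + c 3 + c 4 + c 5 + c 6 + c 7 + c 8 = -1/2 := by
  have hζ : IsPrimitiveRoot (Complex.exp (2 * Real.pi * Complex.I / 17)) 17 :=
    Complex.isPrimitiveRoot_exp 17 (by norm_num)
  have hgs : ∑ k ∈ Finset.range 17, (Complex.exp (2 * Real.pi * Complex.I / 17))^k = 0 :=
    hζ.geom_sum_eq_zero (by norm_num)
  have hre : ∑ k ∈ Finset.range 17, c k = 0 := by
    have := congrArg Complex.re hgs
    rw [Complex.re_sum, Complex.zero_re] at this
    rw [← this]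
    apply Finset.sum_congr rfl
    intro k _
    rw [← Complex.exp_nat_mul]
    have harg : (k : ℂ) * (2 * Real.pi * Complex.I / 17)
        = ((2 * Real.pi * k / 17 : ℝ) : ℂ) * Complex.I := by
      push_cast; ring
    rw [harg, Complex.exp_ofReal_mul_I_re, c]
  simp only [Finset.sum_range_succ, Finset.sum_range_zero] at hre
  rw [hc0, creduce 16 1 (by norm_num), creduce 15 2 (by norm_num),
    creduce 14 3 (by norm_num), creduce 13 4 (by norm_num),
    creduce 12 5 (by norm_num), creduce 11 6 (by norm_num),
    creduce 10 7 (by norm_num), creduce 9 8 (by norm_num)] at hre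
  linarith

end Gauss17

open Gauss17 in
theorem stmt_9 : IsConstr (Real.cos (2 * Real.pi / 17)) := by
  have hS := hsum
  have h11 : c 1 * c 1 = (c 2 + 1)/2 := by
    rw [hmul 1 1 le_rfl]; norm_num [hc0]
  have h21 : c 2 * c 1 = (c 3 + c 1)/2 := by
    rw [hmul 2 1 (by norm_num)]
  have h22 : c 2 * c 2 = (c 4 + 1)/2 := by
    rw [hmul 2 2 le_rfl]; norm_num [hc0]
  have h41 : c 4 * c 1 = (c 5 + c 3)/2 := by
    rw [hmul 4 1 (by norm_num)]
  have h42 : c 4 * c 2 = (c 6 + c 2)/2 := by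
    rw [hmul 4 2 (by norm_num)]
  have h44 : c 4 * c 4 = (c 8 + 1)/2 := by
    rw [hmul 4 4 le_rfl]; norm_num [hc0]
  have h81 : c 8 * c 1 = (c 8 + c 7)/2 := by
    rw [hmul 8 1 (by norm_num)]; norm_num [creduce 9 8 (by norm_num)]
  have h82 : c 8 * c 2 = (c 7 + c 6)/2 := by
    rw [hmul 8 2 (by norm_num)]; norm_num [creduce 10 7 (by norm_num)]
  have h84 : c 8 * c 4 = (c 5 + c 4)/2 := by
    rw [hmul 8 4 (by norm_num)]; norm_num [creduce 12 5 (by norm_num)]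
  have h88 : c 8 * c 8 = (c 1 + 1)/2 := by
    rw [hmul 8 8 le_rfl]; norm_num [hc0, creduce 16 1 (by norm_num)]
  have h63 : c 6 * c 3 = (c 8 + c 3)/2 := by
    rw [hmul 6 3 (by norm_num)]; norm_num [creduce 9 8 (by norm_num)]
  have h65 : c 6 * c 5 = (c 6 + c 1)/2 := by
    rw [hmul 6 5 (by norm_num)]; norm_num [creduce 11 6 (by norm_num)]
  have h73 : c 7 * c 3 = (c 7 + c 4)/2 := by
    rw [hmul 7 3 (by norm_num)]; norm_num [creduce 10 7 (by norm_num)]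
  have h75 : c 7 * c 5 = (c 5 + c 2)/2 := by
    rw [hmul 7 5 (by norm_num)]; norm_num [creduce 12 5 (by norm_num)]
  -- the tower
  set η1 : ℝ := 2*(c 1 + c 2 + c 4 + c 8) with hη1def
  set η2 : ℝ := 2*(c 3 + c 5 + c 6 + c 7) with hη2def
  set β1 : ℝ := 2*(c 1 + c 4) with hβ1def
  set β2 : ℝ := 2*(c 3 + c 5) with hβ2def
  have R1 : η1^2 + 1*η1 + (-4) = 0 := by
    rw [hη1def]
    linear_combination 4*h11 + 4*h22 + 4*h44 + 4*h88 + 8*h21 + 8*h41 + 8*h81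
      + 8*h42 + 8*h82 + 8*h84 + 8*hS
  have hcη1 : IsConstr η1 := isConstr_quad .one (.neg four) R1
  have hcη2 : IsConstr η2 := by
    have : -1 + -η1 = η2 := by rw [hη1def, hη2def]; linarith
    exact isConstr_congr this (.add (.neg .one) (.neg hcη1))
  have R3 : β1^2 + (-η1)*β1 + (-1) = 0 := by
    rw [hη1def, hβ1def]
    linear_combination (-4)*h21 - 4*h42 - 4*h81 - 4*h84 - 2*hS
  have hcβ1 : IsConstr β1 := isConstr_quad (.neg hcη1) (.neg .one) R3
  have R4 : β2^2 + (-η2)*β2 + (-1) = 0 := by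
    rw [hη2def, hβ2def]
    linear_combination (-4)*h63 - 4*h73 - 4*h65 - 4*h75 - 2*hS
  have hcβ2 : IsConstr β2 := isConstr_quad (.neg hcη2) (.neg .one) R4
  have R5 : (2 * c 1)^2 + (-β1)*(2 * c 1) + β2 = 0 := by
    rw [hβ1def, hβ2def]
    linear_combination (-4)*h41
  have hx : IsConstr (2 * c 1) := isConstr_quad (.neg hcβ1) hcβ2 R5
  have hfin : 2 * c 1 * 2⁻¹ = Real.cos (2 * Real.pi / 17) := by
    rw [c]; push_cast; ring_nf
  exact isConstr_congr hfin (.mul hx (.inv two))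
end

section
/- A complex number z = a + bi is constructible from rationals using field operations and complex square roots if and only if both its real part a and imaginary part b are real-constructible (using field operations and square roots of nonnegative reals). -/
inductive IsCConstr : ℂ → Prop
  | rat : ∀ q : ℚ, IsCConstr (q : ℂ)
  | add : ∀ {a b}, IsCConstr a → IsCConstr b → IsCConstr (a + b)
  | neg : ∀ {a}, IsCConstr a → IsCConstr (-a)
  | mul : ∀ {a b}, IsCConstr a → IsCConstr b → IsCConstr (a * b)
  | inv : ∀ {a}, IsCConstr a → IsCConstr a⁻¹
  | sqrt : ∀ {a b}, IsCConstr a → b ^ 2 = a → IsCConstr b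

lemma isConstr_zero : IsConstr 0 := by
  have := IsConstr.add IsConstr.one (IsConstr.neg IsConstr.one)
  simpa using this

lemma isConstr_sub {a b : ℝ} (ha : IsConstr a) (hb : IsConstr b) :
    IsConstr (a - b) := by
  have := IsConstr.add ha (IsConstr.neg hb)
  simpa [sub_eq_add_neg] using this

lemma isConstr_nat (n : ℕ) : IsConstr (n : ℝ) := by
  induction n with
  | zero => simpa using isConstr_zero
  | succ k ih =>
    have := IsConstr.add ih IsConstr.one
    simpa [Nat.cast_succ] using this

lemma isConstr_int (n : ℤ) : IsConstr (n : ℝ) := by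
  rcases n with m | m
  · simpa using isConstr_nat m
  · have := IsConstr.neg (isConstr_nat (m + 1))
    simpa [Int.cast_negSucc] using this

lemma isConstr_rat (q : ℚ) : IsConstr (q : ℝ) := by
  have h : (q : ℝ) = (q.num : ℝ) * ((q.den : ℝ))⁻¹ := by
    rw [Rat.cast_def, div_eq_mul_inv]
  rw [h]
  exact IsConstr.mul (isConstr_int q.num) (IsConstr.inv (isConstr_nat q.den))

lemma constr_of_sq {u : ℝ} (h : IsConstr (u ^ 2)) : IsConstr u := by
  have hs := IsConstr.sqrt h (sq_nonneg u)
  rw [Real.sqrt_sq_eq_abs] at hs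
  rcases abs_cases u with ⟨he, _⟩ | ⟨he, _⟩
  · rwa [he] at hs
  · rw [he] at hs
    simpa using IsConstr.neg hs

lemma isCConstr_ofReal {a : ℝ} (h : IsConstr a) : IsCConstr (a : ℂ) := by
  induction h with
  | one => simpa using IsCConstr.rat 1
  | add _ _ iha ihb => push_cast; exact IsCConstr.add iha ihb
  | neg _ ih => push_cast; exact IsCConstr.neg ih
  | mul _ _ iha ihb => push_cast; exact IsCConstr.mul iha ihb
  | inv _ ih => push_cast; exact IsCConstr.inv ih
  | @sqrt a _ ha ih =>
    refine IsCConstr.sqrt ih ?_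
    rw [← Complex.ofReal_pow, Real.sq_sqrt ha]

lemma isCConstr_I : IsCConstr Complex.I := by
  refine IsCConstr.sqrt (a := ((-1 : ℚ) : ℂ)) (IsCConstr.rat (-1)) ?_
  simp [Complex.I_sq]

theorem stmt_10 (z : ℂ) : IsCConstr z ↔ (IsConstr z.re ∧ IsConstr z.im) := by
  constructor
  · intro h
    induction h with
    | rat q => simp [isConstr_rat, isConstr_zero]
    | add _ _ iha ihb =>
      exact ⟨IsConstr.add iha.1 ihb.1, IsConstr.add iha.2 ihb.2⟩
    | neg _ ih => exact ⟨IsConstr.neg ih.1, IsConstr.neg ih.2⟩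
    | mul _ _ iha ihb =>
      refine ⟨?_, ?_⟩ <;> simp [Complex.mul_re, Complex.mul_im]
      · exact isConstr_sub (IsConstr.mul iha.1 ihb.1) (IsConstr.mul iha.2 ihb.2)
      · exact IsConstr.add (IsConstr.mul iha.1 ihb.2) (IsConstr.mul iha.2 ihb.1)
    | @inv a _ ih =>
      have hd : IsConstr (Complex.normSq a)⁻¹ := by
        refine IsConstr.inv ?_
        have : Complex.normSq a = a.re * a.re + a.im * a.im := Complex.normSq_apply a
        rw [this]
        exact IsConstr.add (IsConstr.mul ih.1 ih.1) (IsConstr.mul ih.2 ih.2)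
      constructor
      · rw [Complex.inv_re, div_eq_mul_inv]
        exact IsConstr.mul ih.1 hd
      · rw [Complex.inv_im, div_eq_mul_inv]
        exact IsConstr.mul (IsConstr.neg ih.2) hd
    | @sqrt a b _ hsq ih =>
      set u := b.re
      set v := b.im
      have hre : a.re = u ^ 2 - v ^ 2 := by
        rw [← hsq]; simp [pow_two, Complex.mul_re, u, v]
      have him : a.im = 2 * (u * v) := by
        rw [← hsq]; simp [pow_two, Complex.mul_im, u, v]; ring
      have hm : Real.sqrt (a.re ^ 2 + a.im ^ 2) = u ^ 2 + v ^ 2 := by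
        have : a.re ^ 2 + a.im ^ 2 = (u ^ 2 + v ^ 2) ^ 2 := by
          rw [hre, him]; ring
        rw [this, Real.sqrt_sq (by positivity)]
      have hmc : IsConstr (u ^ 2 + v ^ 2) := by
        rw [← hm]
        refine IsConstr.sqrt ?_ (by positivity)
        have h1 : IsConstr (a.re ^ 2) := by
          have := IsConstr.mul ih.1 ih.1; rwa [← pow_two] at this
        have h2 : IsConstr (a.im ^ 2) := by
          have := IsConstr.mul ih.2 ih.2; rwa [← pow_two] at this
        exact IsConstr.add h1 h2
      have hhalf : IsConstr ((2 : ℝ))⁻¹ := by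
        have : ((2 : ℝ)) = (1 : ℝ) + 1 := by norm_num
        exact IsConstr.inv (this ▸ IsConstr.add IsConstr.one IsConstr.one)
      have hu2 : IsConstr (u ^ 2) := by
        have : u ^ 2 = ((u ^ 2 + v ^ 2) + a.re) * (2 : ℝ)⁻¹ := by
          rw [hre]; ring
        rw [this]
        exact IsConstr.mul (IsConstr.add hmc ih.1) hhalf
      have hv2 : IsConstr (v ^ 2) := by
        have : v ^ 2 = ((u ^ 2 + v ^ 2) - a.re) * (2 : ℝ)⁻¹ := by
          rw [hre]; ring
        rw [this]
        exact IsConstr.mul (isConstr_sub hmc ih.1) hhalf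
      exact ⟨constr_of_sq hu2, constr_of_sq hv2⟩
  · rintro ⟨hre, him⟩
    have : z = (z.re : ℂ) + (z.im : ℂ) * Complex.I := (Complex.re_add_im z).symm
    rw [this]
    exact IsCConstr.add (isCConstr_ofReal hre)
      (IsCConstr.mul (isCConstr_ofReal him) isCConstr_I)
end

section
/- If a cubic polynomial with rational coefficients has all roots real and has a constructible root, then it has a rational root. -/
open Polynomial

lemma two_mem_subfield (K : Subfield ℝ) : (2 : ℝ) ∈ K := by
  have h := SubfieldClass.ratCast_mem K (2 : ℚ)
  push_cast at h
  exact h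

lemma Multiset.esymm_one' (s : Multiset ℝ) : s.esymm 1 = s.sum := by
  simp [Multiset.esymm, Multiset.powersetCard_one, Multiset.map_map]

noncomputable def sqF : List ℝ → Subfield ℝ
  | [] => (algebraMap ℚ ℝ).fieldRange
  | a :: L => Subfield.closure (↑(sqF L) ∪ {Real.sqrt a})

def GoodT : List ℝ → Prop
  | [] => True
  | a :: L => GoodT L ∧ 0 ≤ a ∧ a ∈ sqF L

lemma ratCast_mem_subfield (K : Subfield ℝ) (q : ℚ) : (q : ℝ) ∈ K :=
  SubfieldClass.ratCast_mem K q

lemma sqF_nil_le (K : Subfield ℝ) : sqF [] ≤ K := by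
  rintro x ⟨q, rfl⟩
  simpa using ratCast_mem_subfield K q

lemma sqF_le_append (L M : List ℝ) : sqF L ≤ sqF (L ++ M) := by
  induction L with
  | nil => exact sqF_nil_le _
  | cons a L ih =>
      exact Subfield.closure_mono (Set.union_subset_union_left _ ih)

lemma le_sqF_append (L M : List ℝ) : sqF M ≤ sqF (L ++ M) := by
  induction L with
  | nil => exact le_rfl
  | cons a L ih =>
      exact ih.trans fun x hx => Subfield.subset_closure (Set.mem_union_left _ hx)

lemma goodT_append {L M : List ℝ} (hL : GoodT L) (hM : GoodT M) : GoodT (L ++ M) := by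
  induction L with
  | nil => exact hM
  | cons a L ih =>
      obtain ⟨h1, h2, h3⟩ := hL
      exact ⟨ih h1, h2, sqF_le_append L M h3⟩

lemma isConstr_tower {x : ℝ} (h : IsConstr x) : ∃ L, GoodT L ∧ x ∈ sqF L := by
  induction h with
  | one => exact ⟨[], trivial, 1, by simp⟩
  | add ha hb iha ihb =>
      obtain ⟨L, hL, hxL⟩ := iha
      obtain ⟨M, hM, hyM⟩ := ihb
      exact ⟨L ++ M, goodT_append hL hM,
        (sqF (L ++ M)).add_mem (sqF_le_append L M hxL) (le_sqF_append L M hyM)⟩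
  | neg ha iha =>
      obtain ⟨L, hL, hxL⟩ := iha
      exact ⟨L, hL, (sqF L).neg_mem hxL⟩
  | mul ha hb iha ihb =>
      obtain ⟨L, hL, hxL⟩ := iha
      obtain ⟨M, hM, hyM⟩ := ihb
      exact ⟨L ++ M, goodT_append hL hM,
        (sqF (L ++ M)).mul_mem (sqF_le_append L M hxL) (le_sqF_append L M hyM)⟩
  | inv ha iha =>
      obtain ⟨L, hL, hxL⟩ := iha
      exact ⟨L, hL, (sqF L).inv_mem hxL⟩
  | sqrt ha h0 iha =>
      obtain ⟨L, hL, hxL⟩ := iha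
      refine ⟨_ :: L, ⟨hL, h0, hxL⟩, ?_⟩
      exact Subfield.subset_closure (Set.mem_union_right _ rfl)

/-- The set `{p + q*s : p, q ∈ K}` as a subfield, assuming `s*s ∈ K`. -/
noncomputable def quadExt (K : Subfield ℝ) (s : ℝ) (hss : s * s ∈ K) : Subfield ℝ where
  carrier := {x | ∃ p ∈ K, ∃ q ∈ K, x = p + q * s}
  zero_mem' := ⟨0, K.zero_mem, 0, K.zero_mem, by ring⟩
  one_mem' := ⟨1, K.one_mem, 0, K.zero_mem, by ring⟩
  add_mem' := by
    rintro x y ⟨p, hp, q, hq, rfl⟩ ⟨p', hp', q', hq', rfl⟩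
    exact ⟨p + p', K.add_mem hp hp', q + q', K.add_mem hq hq', by ring⟩
  neg_mem' := by
    rintro x ⟨p, hp, q, hq, rfl⟩
    exact ⟨-p, K.neg_mem hp, -q, K.neg_mem hq, by ring⟩
  mul_mem' := by
    rintro x y ⟨p, hp, q, hq, rfl⟩ ⟨p', hp', q', hq', rfl⟩
    exact ⟨p * p' + s * s * (q * q'), K.add_mem (K.mul_mem hp hp')
      (K.mul_mem hss (K.mul_mem hq hq')),
      p * q' + q * p', K.add_mem (K.mul_mem hp hq') (K.mul_mem hq hp'), by ring⟩
  inv_mem' := by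
    rintro x ⟨p, hp, q, hq, rfl⟩
    by_cases hx0 : p + q * s = 0
    · exact ⟨0, K.zero_mem, 0, K.zero_mem, by simp [hx0]⟩
    by_cases hd : p * p - s * s * (q * q) = 0
    · -- then p - q*s = 0, so p + q*s = 2*q*s with q ≠ 0, s ≠ 0
      have hpq : p - q * s = 0 := by
        rcases mul_eq_zero.1 (show (p + q * s) * (p - q * s) = 0 by
          rw [show (p + q * s) * (p - q * s) = p * p - s * s * (q * q) by ring, hd]) with h | h
        · exact absurd h hx0
        · exact h
      have hs0 : s ≠ 0 := by
        rintro rfl; apply hx0; simp only [mul_zero, add_zero]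
        simpa using hpq
      have hq0 : q ≠ 0 := by
        rintro rfl; apply hx0; simpa using hpq
      refine ⟨0, K.zero_mem, (2 * q * (s * s))⁻¹,
        K.inv_mem (K.mul_mem (K.mul_mem (two_mem_subfield K) hq) hss), ?_⟩
      have hx2 : p + q * s = 2 * q * s := by
        have : p = q * s := by linarith [hpq]
        rw [this]; ring
      rw [hx2]
      field_simp
      ring
    · refine ⟨p / (p * p - s * s * (q * q)), K.div_mem hp
        (K.sub_mem (K.mul_mem hp hp) (K.mul_mem hss (K.mul_mem hq hq))),
        -q / (p * p - s * s * (q * q)), K.div_mem (K.neg_mem hq)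
        (K.sub_mem (K.mul_mem hp hp) (K.mul_mem hss (K.mul_mem hq hq))), ?_⟩
      refine (inv_eq_of_mul_eq_one_right ?_)
      field_simp
      rw [div_eq_one_iff_eq (by intro h; apply hd; linear_combination h)]
      ring

lemma quad_rep {K : Subfield ℝ} {s : ℝ} (hss : s * s ∈ K) {x : ℝ}
    (hx : x ∈ Subfield.closure (↑K ∪ {s})) : ∃ p ∈ K, ∃ q ∈ K, x = p + q * s := by
  have hle : Subfield.closure (↑K ∪ {s}) ≤ quadExt K s hss := by
    rw [Subfield.closure_le]
    rintro y (hy | hy)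
    · exact ⟨y, hy, 0, K.zero_mem, by ring⟩
    · rcases hy with rfl
      exact ⟨0, K.zero_mem, 1, K.one_mem, by ring⟩
  exact hle hx

/-- The conjugation-stable subalgebra of `ℝ × ℝ`. -/
noncomputable def conjAlg (K : Subfield ℝ) (s : ℝ) (hss : s * s ∈ K) :
    Subalgebra ℚ (ℝ × ℝ) where
  carrier := {u | ∃ p ∈ K, ∃ q ∈ K, u.1 = p + q * s ∧ u.2 = p - q * s}
  zero_mem' := ⟨0, K.zero_mem, 0, K.zero_mem, by simp, by simp⟩
  one_mem' := ⟨1, K.one_mem, 0, K.zero_mem, by simp, by simp⟩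
  add_mem' := by
    rintro x y ⟨p, hp, q, hq, h1, h2⟩ ⟨p', hp', q', hq', h1', h2'⟩
    exact ⟨p + p', K.add_mem hp hp', q + q', K.add_mem hq hq',
      by simp [Prod.fst_add, h1, h1']; ring, by simp [Prod.snd_add, h2, h2']; ring⟩
  mul_mem' := by
    rintro x y ⟨p, hp, q, hq, h1, h2⟩ ⟨p', hp', q', hq', h1', h2'⟩
    exact ⟨p * p' + s * s * (q * q'), K.add_mem (K.mul_mem hp hp')
      (K.mul_mem hss (K.mul_mem hq hq')),
      p * q' + q * p', K.add_mem (K.mul_mem hp hq') (K.mul_mem hq hp'),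
      by simp [Prod.fst_mul, h1, h1']; ring, by simp [Prod.snd_mul, h2, h2']; ring⟩
  algebraMap_mem' := fun r =>
    ⟨(r : ℝ), ratCast_mem_subfield K r, 0, K.zero_mem, by simp [Prod.algebraMap_apply], by
      simp [Prod.algebraMap_apply]⟩

lemma aeval_mem_conjAlg {K : Subfield ℝ} {s : ℝ} (hss : s * s ∈ K)
    {z : ℝ × ℝ} (hz : z ∈ conjAlg K s hss) (P : Polynomial ℚ) :
    Polynomial.aeval z P ∈ conjAlg K s hss := by
  rw [Polynomial.aeval_eq_sum_range]
  exact Subalgebra.sum_mem _ fun i _ =>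
    Subalgebra.smul_mem _ (Subalgebra.pow_mem _ hz i) _

lemma aeval_fst (x y : ℝ) (P : Polynomial ℚ) :
    (Polynomial.aeval ((x, y) : ℝ × ℝ) P).1 = Polynomial.aeval x P := by
  have := Polynomial.aeval_algHom_apply (AlgHom.fst ℚ ℝ ℝ) ((x, y) : ℝ × ℝ) P
  simpa using this.symm

lemma aeval_snd (x y : ℝ) (P : Polynomial ℚ) :
    (Polynomial.aeval ((x, y) : ℝ × ℝ) P).2 = Polynomial.aeval y P := by
  have := Polynomial.aeval_algHom_apply (AlgHom.snd ℚ ℝ ℝ) ((x, y) : ℝ × ℝ) P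
  simpa using this.symm

lemma key (P : Polynomial ℚ) (hdeg : P.natDegree = 3) :
    ∀ L, GoodT L → ∀ x : ℝ, x ∈ sqF L → Polynomial.aeval x P = 0 →
      ∃ q : ℚ, P.eval q = 0 := by
  intro L
  induction L with
  | nil =>
      rintro _ x ⟨q, rfl⟩ hx0
      refine ⟨q, ?_⟩
      have : Polynomial.aeval (algebraMap ℚ ℝ q) P = algebraMap ℚ ℝ (P.eval q) := by
        rw [Polynomial.aeval_algebraMap_apply]
        simp
      rw [this] at hx0
      exact (_root_.map_eq_zero (algebraMap ℚ ℝ)).1 hx0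
  | cons a L ih =>
      rintro ⟨hgL, ha0, haL⟩ x hx hx0
      set K := sqF L with hK
      set s := Real.sqrt a with hs
      have hss : s * s ∈ K := by
        rw [hs, Real.mul_self_sqrt ha0]; exact haL
      by_cases hsK : s ∈ K
      · have hle : sqF (a :: L) ≤ K := by
          show Subfield.closure _ ≤ K
          rw [Subfield.closure_le]
          rintro y (hy | hy)
          · exact hy
          · rcases hy with rfl; exact hsK
        exact ih hgL x (hle hx) hx0
      obtain ⟨p, hp, q, hq, rfl⟩ := quad_rep hss hx
      by_cases hq0 : q = 0
      · exact ih hgL _ (by simpa [hq0] using hp) (by simpa [hq0] using hx0)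
      have hs0 : s ≠ 0 := fun h => hsK (h ▸ K.zero_mem)
      -- conjugate is also a root
      have hz : ((p + q * s, p - q * s) : ℝ × ℝ) ∈ conjAlg K s hss :=
        ⟨p, hp, q, hq, rfl, rfl⟩
      obtain ⟨A, hA, B, hB, e1, e2⟩ := aeval_mem_conjAlg hss hz P
      rw [aeval_fst, hx0] at e1
      rw [aeval_snd] at e2
      have hB0 : B = 0 := by
        by_contra hB0
        exact hsK (by
          have : s = -A / B := by field_simp; linarith [e1.symm]
          rw [this]; exact K.div_mem (K.neg_mem hA) hB)
      have hA0 : A = 0 := by simpa [hB0] using e1.symm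
      have hconj : Polynomial.aeval (p - q * s) P = 0 := by rw [e2, hA0, hB0]; ring
      -- polynomial bookkeeping over ℝ
      set Qp := P.map (algebraMap ℚ ℝ) with hQp
      have hP0 : P ≠ 0 := fun h => by simp [h] at hdeg
      have hQ0 : Qp ≠ 0 := by
        rw [hQp, Ne, Polynomial.map_eq_zero]; exact hP0
      have hdQ : Qp.natDegree = 3 := by rw [hQp, Polynomial.natDegree_map, hdeg]
      have hne : (p + q * s) ≠ (p - q * s) := by
        intro h
        apply hq0
        have : q * s = 0 := by linarith
        rcases mul_eq_zero.1 this with h | h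
        · exact h
        · exact absurd h hs0
      have hrx : Qp.IsRoot (p + q * s) := by
        rw [Polynomial.IsRoot, Polynomial.eval_map, ← Polynomial.aeval_def, hx0]
      have hrx' : Qp.IsRoot (p - q * s) := by
        rw [Polynomial.IsRoot, Polynomial.eval_map, ← Polynomial.aeval_def, hconj]
      have hdvd : (X - C (p + q * s)) * (X - C (p - q * s)) ∣ Qp :=
        (Polynomial.isCoprime_X_sub_C_of_isUnit_sub (by
          simpa using sub_ne_zero.2 hne)).mul_dvd
          (Polynomial.dvd_iff_isRoot.2 hrx) (Polynomial.dvd_iff_isRoot.2 hrx')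
      obtain ⟨R, hR⟩ := hdvd
      have hR0 : R ≠ 0 := by
        rintro rfl
        rw [mul_zero] at hR
        exact hQ0 hR
      have hX1 : (X - C (p + q * s) : ℝ[X]) ≠ 0 := Polynomial.X_sub_C_ne_zero _
      have hX2 : (X - C (p - q * s) : ℝ[X]) ≠ 0 := Polynomial.X_sub_C_ne_zero _
      have hdegR : R.natDegree = 1 := by
        have h1 : Qp.natDegree = ((X - C (p + q * s)) * (X - C (p - q * s))).natDegree
            + R.natDegree := by
          rw [hR, Polynomial.natDegree_mul (mul_ne_zero hX1 hX2) hR0]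
        rw [Polynomial.natDegree_mul hX1 hX2, Polynomial.natDegree_X_sub_C,
          Polynomial.natDegree_X_sub_C, hdQ] at h1
        omega
      have hspR : R.Splits :=
        Polynomial.Splits.of_natDegree_le_one (by omega)
      have hcardR : R.roots.card = 1 := by
        rw [← hdegR]
        exact (Polynomial.splits_iff_card_roots).1 hspR
      obtain ⟨t, ht⟩ := Multiset.card_eq_one.1 hcardR
      have htroot : Qp.IsRoot t := by
        have : t ∈ R.roots := by rw [ht]; exact Multiset.mem_singleton_self t
        have hRt : R.IsRoot t := (Polynomial.mem_roots hR0).1 this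
        rw [hR]
        exact Polynomial.IsRoot.dvd hRt ⟨_, mul_comm _ _⟩
      have hroots : Qp.roots = {p + q * s} + {p - q * s} + R.roots := by
        rw [hR, Polynomial.roots_mul (hR ▸ hQ0),
          Polynomial.roots_mul (mul_ne_zero hX1 hX2),
          Polynomial.roots_X_sub_C, Polynomial.roots_X_sub_C]
      have hcard3 : Qp.roots.card = Qp.natDegree := by
        rw [hroots, hdQ]; simp [ht]
      -- Vieta
      have hV := Polynomial.coeff_eq_esymm_roots_of_card hcard3
        (k := 2) (by rw [hdQ]; norm_num)
      rw [hdQ] at hV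
      norm_num at hV
      rw [Multiset.esymm_one'] at hV
      have hsum : Qp.roots.sum = (p + q * s) + (p - q * s) + t := by
        rw [hroots, ht]; simp; ring
      have hlead : Qp.leadingCoeff = algebraMap ℚ ℝ (P.leadingCoeff) := by
        rw [hQp, Polynomial.leadingCoeff, Polynomial.natDegree_map,
          Polynomial.coeff_map, Polynomial.leadingCoeff]
      have hlead0 : Qp.leadingCoeff ≠ 0 := Polynomial.leadingCoeff_ne_zero.2 hQ0
      have hc2 : Qp.coeff 2 = algebraMap ℚ ℝ (P.coeff 2) := by
        rw [hQp, Polynomial.coeff_map]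
      -- t = -coeff2/lead - 2p
      have ht_eq : t = -(Qp.coeff 2) / Qp.leadingCoeff - 2 * p := by
        rw [hV, hsum]
        field_simp
        ring
      have htK : t ∈ K := by
        rw [ht_eq, hc2, hlead]
        have : -(algebraMap ℚ ℝ (P.coeff 2)) / algebraMap ℚ ℝ P.leadingCoeff
            = ((-(P.coeff 2) / P.leadingCoeff : ℚ) : ℝ) := by
          push_cast [div_eq_mul_inv]
          norm_num [eq_ratCast]
        rw [this]
        exact K.sub_mem (ratCast_mem_subfield K _)
          (K.mul_mem (two_mem_subfield K) hp)
      have htP : Polynomial.aeval t P = 0 := by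
        rw [Polynomial.aeval_def, ← Polynomial.eval_map]
        exact htroot
      exact ih hgL t htK htP

theorem stmt_16 (P : Polynomial ℚ) (hdeg : P.natDegree = 3)
    (hreal : ∀ z : ℂ, Polynomial.aeval z P = 0 → z.im = 0)
    (x : ℝ) (hx : Polynomial.aeval x P = 0) (hxc : IsConstr x) :
    ∃ q : ℚ, P.eval q = 0 := by
  obtain ⟨L, hL, hxL⟩ := isConstr_tower hxc
  exact key P hdeg L hL x hxL hx
end

section
/- cos(2π/9) is not constructible. -/
open IntermediateField Polynomial

inductive Tower : IntermediateField ℚ ℝ → Prop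
  | bot : Tower ⊥
  | step {K : IntermediateField ℚ ℝ} {a : ℝ} (hK : Tower K) (ha : a ∈ K) (h0 : 0 ≤ a) :
      Tower ((IntermediateField.adjoin K {Real.sqrt a}).restrictScalars ℚ)

lemma tower_le_step {K : IntermediateField ℚ ℝ} {a : ℝ} :
    K ≤ (IntermediateField.adjoin K {Real.sqrt a}).restrictScalars ℚ := by
  erw [restrictScalars_adjoin_eq_sup]
  exact le_sup_left

lemma sqrt_mem_step {K : IntermediateField ℚ ℝ} {a : ℝ} :
    Real.sqrt a ∈ (IntermediateField.adjoin K {Real.sqrt a}).restrictScalars ℚ := by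
  erw [restrictScalars_adjoin_eq_sup]
  exact (le_sup_right : adjoin ℚ {Real.sqrt a} ≤ _) (subset_adjoin _ _ rfl)

lemma tower_sup {K L : IntermediateField ℚ ℝ} (hK : Tower K) (hL : Tower L) :
    ∃ M, Tower M ∧ K ≤ M ∧ L ≤ M := by
  induction hL with
  | bot => exact ⟨K, hK, le_refl _, bot_le⟩
  | @step L a hL' ha h0 ih =>
    obtain ⟨M, hM, hKM, hLM⟩ := ih
    refine ⟨(IntermediateField.adjoin M {Real.sqrt a}).restrictScalars ℚ,
      Tower.step hM (hLM ha) h0, le_trans hKM tower_le_step, ?_⟩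
    erw [restrictScalars_adjoin_eq_sup, restrictScalars_adjoin_eq_sup]
    exact sup_le_sup_right hLM _

lemma sqrt_integral {K : IntermediateField ℚ ℝ} {a : ℝ} (ha : a ∈ K) (h0 : 0 ≤ a) :
    IsIntegral K (Real.sqrt a) := by
  refine ⟨X ^ 2 - C (⟨a, ha⟩ : K), monic_X_pow_sub_C _ two_ne_zero, ?_⟩
  simp only [eval₂_sub, eval₂_X_pow, eval₂_C]
  show Real.sqrt a ^ 2 - a = 0
  rw [Real.sq_sqrt h0, sub_self]

lemma tower_finrank {K : IntermediateField ℚ ℝ} (hK : Tower K) :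
    FiniteDimensional ℚ K ∧ ∃ n : ℕ, Module.finrank ℚ K = 2 ^ n := by
  induction hK with
  | bot =>
    refine ⟨inferInstance, 0, ?_⟩
    simp [IntermediateField.finrank_bot]
  | @step K a hK ha h0 ih =>
    obtain ⟨hfd, n, hn⟩ := ih
    have hint : IsIntegral K (Real.sqrt a) := sqrt_integral ha h0
    have hfd2 : FiniteDimensional K K⟮Real.sqrt a⟯ := adjoin.finiteDimensional hint
    have hfd' : FiniteDimensional ℚ ((adjoin K {Real.sqrt a}).restrictScalars ℚ) :=
      FiniteDimensional.trans ℚ K K⟮Real.sqrt a⟯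
    refine ⟨hfd', ?_⟩
    have hd : Module.finrank K K⟮Real.sqrt a⟯ = (minpoly K (Real.sqrt a)).natDegree :=
      adjoin.finrank hint
    have hle : (minpoly K (Real.sqrt a)).natDegree ≤ 2 := by
      have := minpoly.min K (Real.sqrt a) (monic_X_pow_sub_C (⟨a, ha⟩ : K) two_ne_zero)
        (by simp only [aeval_def, eval₂_sub, eval₂_X_pow, eval₂_C]
            show Real.sqrt a ^ 2 - a = 0
            rw [Real.sq_sqrt h0, sub_self])
      have h2 : (X ^ 2 - C (⟨a, ha⟩ : K)).degree = 2 := degree_X_pow_sub_C two_pos _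
      have := this.trans h2.le
      exact natDegree_le_iff_degree_le.mpr this
    have hpos : 0 < (minpoly K (Real.sqrt a)).natDegree := minpoly.natDegree_pos hint
    have hmul : Module.finrank ℚ ((adjoin K {Real.sqrt a}).restrictScalars ℚ)
        = Module.finrank ℚ K * Module.finrank K K⟮Real.sqrt a⟯ :=
      (Module.finrank_mul_finrank ℚ K K⟮Real.sqrt a⟯).symm
    interval_cases h : (minpoly K (Real.sqrt a)).natDegree
    · exact ⟨n, by rw [hmul, hd, hn, mul_one]⟩
    · exact ⟨n + 1, by rw [hmul, hd, hn, pow_succ]⟩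

lemma isConstr_mem {x : ℝ} (hx : IsConstr x) : ∃ K, Tower K ∧ x ∈ K := by
  induction hx with
  | one => exact ⟨⊥, Tower.bot, one_mem ⊥⟩
  | add ha hb iha ihb =>
    obtain ⟨K, hK, haK⟩ := iha; obtain ⟨L, hL, hbL⟩ := ihb
    obtain ⟨M, hM, hKM, hLM⟩ := tower_sup hK hL
    exact ⟨M, hM, add_mem (hKM haK) (hLM hbL)⟩
  | neg ha iha =>
    obtain ⟨K, hK, haK⟩ := iha
    exact ⟨K, hK, neg_mem haK⟩
  | mul ha hb iha ihb =>
    obtain ⟨K, hK, haK⟩ := iha; obtain ⟨L, hL, hbL⟩ := ihb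
    obtain ⟨M, hM, hKM, hLM⟩ := tower_sup hK hL
    exact ⟨M, hM, mul_mem (hKM haK) (hLM hbL)⟩
  | inv ha iha =>
    obtain ⟨K, hK, haK⟩ := iha
    exact ⟨K, hK, inv_mem haK⟩
  | @sqrt a ha h0 iha =>
    obtain ⟨K, hK, haK⟩ := iha
    exact ⟨_, Tower.step hK haK h0, sqrt_mem_step⟩

lemma no_rat_root (r : ℚ) : 8 * r ^ 3 - 6 * r + 1 ≠ 0 := by
  intro h
  have hd0 : (r.den : ℚ) ≠ 0 := by positivity
  set n : ℤ := r.num with hn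
  set d : ℤ := (r.den : ℤ) with hdd
  have hd : 0 < d := by rw [hdd]; exact_mod_cast r.pos
  have key : 8 * n ^ 3 - 6 * n * d ^ 2 + d ^ 3 = 0 := by
    have hr : (r : ℚ) = (n : ℚ) / (d : ℚ) := by
      rw [hn, hdd]; push_cast; exact (Rat.num_div_den r).symm
    rw [hr] at h
    have hdq : (d : ℚ) ≠ 0 := by exact_mod_cast hd.ne'
    field_simp at h
    have key' : n * (8 * n ^ 2 - d ^ 2 * 6) + d ^ 3 = d ^ 3 * 0 := by exact_mod_cast h
    have h2 : d * (8 * n ^ 3 - 6 * n * d ^ 2 + d ^ 3) = 0 := by linear_combination d * key'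
    exact (mul_eq_zero.mp h2).resolve_left hd.ne'
  have cop : Nat.Coprime n.natAbs r.den := r.reduced
  -- n ∣ d^3
  have hnd : n ∣ d ^ 3 := ⟨6 * d ^ 2 - 8 * n ^ 2, by linarith [key]⟩
  have hn1 : n.natAbs = 1 := by
    have : n.natAbs ∣ r.den ^ 3 := by
      have := Int.natAbs_dvd_natAbs.mpr hnd
      simpa [Int.natAbs_pow, hdd] using this
    exact (cop.pow_right 3).eq_one_of_dvd this
  have hd8 : d ∣ 8 := by
    have h8 : d ∣ 8 * n ^ 3 := ⟨6 * n * d - d ^ 2, by linarith [key]⟩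
    rcases Int.natAbs_eq_iff.mp hn1 with h1 | h1 <;> rw [h1] at h8 <;>
      simpa [Int.dvd_neg] using h8
  have hdle : d ≤ 8 := Int.le_of_dvd (by norm_num) hd8
  rcases Int.natAbs_eq_iff.mp hn1 with h1 | h1 <;> rw [h1] at key <;>
    interval_cases d <;> norm_num at key

noncomputable def q : Polynomial ℚ := X ^ 3 - C (3 / 4) * X + C (1 / 8)

lemma q_natDegree : q.natDegree = 3 := by unfold q; compute_degree!

lemma q_monic : q.Monic := by unfold q; monicity!

lemma q_aeval : Polynomial.aeval (Real.cos (2 * Real.pi / 9)) q = 0 := by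
  set x := Real.cos (2 * Real.pi / 9) with hx
  have h3 : Real.cos (3 * (2 * Real.pi / 9)) = -(1 / 2) := by
    have : 3 * (2 * Real.pi / 9) = Real.pi - Real.pi / 3 := by ring
    rw [this, Real.cos_pi_sub, Real.cos_pi_div_three]
  rw [Real.cos_three_mul] at h3
  unfold q
  simp only [map_add, map_sub, map_mul, map_pow, aeval_X, aeval_C]
  norm_num
  linarith [h3]

lemma q_irr : Irreducible q := by
  rw [irreducible_iff_roots_eq_zero_of_degree_le_three (by rw [q_natDegree]; norm_num)
    (by rw [q_natDegree])]
  rw [Multiset.eq_zero_iff_forall_notMem]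
  intro r hr
  have hq0 : q ≠ 0 := q_monic.ne_zero
  rw [mem_roots hq0] at hr
  have : 8 * r ^ 3 - 6 * r + 1 = 0 := by
    have := hr
    unfold q at this
    simp only [IsRoot, eval_add, eval_sub, eval_mul, eval_pow, eval_X, eval_C] at this
    linarith
  exact no_rat_root r this

theorem stmt_17 : ¬ IsConstr (Real.cos (2 * Real.pi / 9)) := by
  intro h
  obtain ⟨K, hK, hxK⟩ := isConstr_mem h
  obtain ⟨hfd, n, hn⟩ := tower_finrank hK
  set x := Real.cos (2 * Real.pi / 9) with hxdef
  have hmin : minpoly ℚ x = q := (minpoly.eq_of_irreducible_of_monic q_irr q_aeval q_monic).symm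
  have hy : minpoly ℚ (⟨x, hxK⟩ : K) = minpoly ℚ x := by
    have := minpoly.algebraMap_eq (A := ℚ) (B := K) (B' := ℝ) (algebraMap K ℝ).injective (⟨x, hxK⟩ : K)
    rw [show algebraMap K ℝ ⟨x, hxK⟩ = x from rfl] at this; exact this.symm
  have hint : IsIntegral ℚ (⟨x, hxK⟩ : K) := IsIntegral.of_finite ℚ _
  have hdvd : (minpoly ℚ (⟨x, hxK⟩ : K)).natDegree ∣ Module.finrank ℚ K :=
    minpoly.degree_dvd hint
  rw [hy, hmin, q_natDegree, hn] at hdvd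
  have h32 : (3 : ℕ) ∣ 2 := Nat.Prime.dvd_of_dvd_pow Nat.prime_three hdvd
  omega
end
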